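/- arXiv:2311.00875 — 3 statements merged into one kernel-verified Lean document; each statement's English description precedes it below -/
import Mathlib

section
/- Let d, N ≥ 1, let U : (0,∞) → ℝ be differentiable with φ(r) = −U′(r)/r, and let I ⊆ ℝ be an open interval. Suppose x₁,…,x_N : I → ℝ^d are differentiable functions with x_i(t) ≠ x_{i'}(t) for all t ∈ I and all i ≠ i', satisfying ẋ_i(t) = (1/N) Σ_{i' ≠ i} φ(‖x_{i'}(t) − x_i(t)‖)(x_{i'}(t) − x_i(t)) for all t ∈ I. Then the total energy t ↦ E(x₁(t),…,x_N(t)) = (1/(2N)) Σ_{1 ≤ j ≠ k ≤ N} U(‖x_k(t) − x_j(t)‖) is differentiable with derivative Σ_{i=1}^N ‖ẋ_i(t)‖² ≥ 0; in particular it is nondecreasing on I. -/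
open Finset

open RealInnerProductSpace

theorem stmt_2 (d N : ℕ) (hd : 1 ≤ d) (hN : 1 ≤ N)
    (U U' : ℝ → ℝ) (hU : ∀ r > (0 : ℝ), HasDerivAt U (U' r) r)
    (φ : ℝ → ℝ) (hφ : ∀ r > (0 : ℝ), φ r = -U' r / r)
    (a b : ℝ)
    (x : ℝ → Fin N → EuclideanSpace ℝ (Fin d))
    (hsep : ∀ t ∈ Set.Ioo a b, ∀ i i' : Fin N, i ≠ i' → x t i ≠ x t i')
    (v : ℝ → Fin N → EuclideanSpace ℝ (Fin d))
    (hv : ∀ t i, v t i =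
      (N : ℝ)⁻¹ • ∑ i' ∈ Finset.univ.erase i, φ ‖x t i' - x t i‖ • (x t i' - x t i))
    (hODE : ∀ i : Fin N, ∀ t ∈ Set.Ioo a b, HasDerivAt (fun s => x s i) (v t i) t)
    (Egy : (Fin N → EuclideanSpace ℝ (Fin d)) → ℝ)
    (hEgy : ∀ y, Egy y =
      (1 / (2 * (N : ℝ))) * ∑ j, ∑ k ∈ Finset.univ.erase j, U ‖y k - y j‖) :
    (∀ t ∈ Set.Ioo a b,
        HasDerivAt (fun s => Egy (x s)) (∑ i, ‖v t i‖ ^ 2) t ∧ 0 ≤ ∑ i, ‖v t i‖ ^ 2) ∧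
      MonotoneOn (fun t => Egy (x t)) (Set.Ioo a b) := by
  have hNne : (N : ℝ) ≠ 0 := Nat.cast_ne_zero.mpr (by omega)
  -- swap lemma for double sums over distinct pairs
  have hswap : ∀ (F : Fin N → Fin N → ℝ),
      ∑ j, ∑ k ∈ Finset.univ.erase j, F j k = ∑ k, ∑ j ∈ Finset.univ.erase k, F j k := by
    intro F
    refine Finset.sum_comm' ?_
    intro i j
    simp [Finset.mem_erase]
    tauto
  have key : ∀ t ∈ Set.Ioo a b,
      HasDerivAt (fun s => Egy (x s)) (∑ i, ‖v t i‖ ^ 2) t := by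
    intro t ht
    have hfun : (fun s => Egy (x s)) =
        fun s => (1 / (2 * (N : ℝ))) * ∑ j, ∑ k ∈ Finset.univ.erase j, U ‖x s k - x s j‖ :=
      funext fun s => hEgy (x s)
    -- positivity of pairwise distances
    have hpos : ∀ j k : Fin N, k ≠ j → (0 : ℝ) < ‖x t k - x t j‖ := by
      intro j k hkj
      rw [norm_pos_iff]
      exact sub_ne_zero.mpr (hsep t ht k j hkj)
    -- derivative of each pairwise term
    have hpair : ∀ j k : Fin N, k ∈ Finset.univ.erase j →
        HasDerivAt (fun s => U ‖x s k - x s j‖)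
          (U' ‖x t k - x t j‖ *
            (⟪x t k - x t j, v t k - v t j⟫ / ‖x t k - x t j‖)) t := by
      intro j k hk
      have hkj : k ≠ j := Finset.ne_of_mem_erase hk
      have hp := hpos j k hkj
      have hw : HasDerivAt (fun s => x s k - x s j) (v t k - v t j) t :=
        (hODE k t ht).sub (hODE j t ht)
      have hg : HasDerivAt (fun s => ⟪x s k - x s j, x s k - x s j⟫)
          (⟪x t k - x t j, v t k - v t j⟫ + ⟪v t k - v t j, x t k - x t j⟫) t :=
        hw.inner ℝ hw
      have hgne : ⟪x t k - x t j, x t k - x t j⟫ ≠ 0 := by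
        rw [real_inner_self_eq_norm_sq]
        positivity
      have hsq := (Real.hasDerivAt_sqrt hgne).comp t hg
      have hr : HasDerivAt (fun s => ‖x s k - x s j‖)
          (⟪x t k - x t j, v t k - v t j⟫ / ‖x t k - x t j‖) t := by
        have hfn : (fun s => Real.sqrt ⟪x s k - x s j, x s k - x s j⟫)
            = fun s => ‖x s k - x s j‖ := by
          funext s
          rw [real_inner_self_eq_norm_sq, Real.sqrt_sq (norm_nonneg _)]
        have hval : 1 / (2 * Real.sqrt ⟪x t k - x t j, x t k - x t j⟫) *
            (⟪x t k - x t j, v t k - v t j⟫ + ⟪v t k - v t j, x t k - x t j⟫)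
            = ⟪x t k - x t j, v t k - v t j⟫ / ‖x t k - x t j‖ := by
          rw [real_inner_self_eq_norm_sq, Real.sqrt_sq (norm_nonneg _),
            real_inner_comm (v t k - v t j)]
          field_simp
          ring
        rw [← hfn, ← hval]
        simpa [Function.comp_def] using hsq
      exact (hU _ hp).comp t hr
    have hsum : HasDerivAt
        (fun s => (1 / (2 * (N : ℝ))) * ∑ j, ∑ k ∈ Finset.univ.erase j, U ‖x s k - x s j‖)
        ((1 / (2 * (N : ℝ))) * ∑ j, ∑ k ∈ Finset.univ.erase j,
          U' ‖x t k - x t j‖ * (⟪x t k - x t j, v t k - v t j⟫ / ‖x t k - x t j‖)) t :=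
      HasDerivAt.const_mul _
        (HasDerivAt.fun_sum fun j _ => HasDerivAt.fun_sum fun k hk => hpair j k hk)
    rw [hfun]
    -- algebraic identity for the derivative value
    have hterm : ∀ k : Fin N, ∀ j ∈ Finset.univ.erase k,
        φ ‖x t j - x t k‖ * ⟪x t j - x t k, v t k⟫
        = U' ‖x t k - x t j‖ * (⟪x t k - x t j, v t k⟫ / ‖x t k - x t j‖) := by
      intro k j hj
      have hp : (0 : ℝ) < ‖x t j - x t k‖ := hpos k j (Finset.ne_of_mem_erase hj)
      rw [hφ _ hp, norm_sub_rev (x t j), ← neg_sub (x t k) (x t j), inner_neg_left]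
      ring
    have hk2 : ∀ k : Fin N, ‖v t k‖ ^ 2
        = (N : ℝ)⁻¹ * ∑ j ∈ Finset.univ.erase k,
            U' ‖x t k - x t j‖ * (⟪x t k - x t j, v t k⟫ / ‖x t k - x t j‖) := by
      intro k
      rw [← real_inner_self_eq_norm_sq]
      nth_rewrite 1 [hv t k]
      rw [real_inner_smul_left, sum_inner]
      congr 1
      refine Finset.sum_congr rfl fun j hj => ?_
      rw [real_inner_smul_left]
      exact hterm k j hj
    -- value of derivative equals ∑ ‖v t i‖²
    have hval2 : (1 / (2 * (N : ℝ))) * ∑ j, ∑ k ∈ Finset.univ.erase j,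
          U' ‖x t k - x t j‖ * (⟪x t k - x t j, v t k - v t j⟫ / ‖x t k - x t j‖)
        = ∑ i, ‖v t i‖ ^ 2 := by
      have hsplit : ∀ j : Fin N, ∀ k ∈ Finset.univ.erase j,
          U' ‖x t k - x t j‖ * (⟪x t k - x t j, v t k - v t j⟫ / ‖x t k - x t j‖)
          = U' ‖x t k - x t j‖ * (⟪x t k - x t j, v t k⟫ / ‖x t k - x t j‖)
            - U' ‖x t k - x t j‖ * (⟪x t k - x t j, v t j⟫ / ‖x t k - x t j‖) := by
        intro j k hk
        rw [inner_sub_right]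
        ring
      have hBA : ∀ j : Fin N, ∀ k ∈ Finset.univ.erase j,
          U' ‖x t j - x t k‖ * (⟪x t j - x t k, v t k⟫ / ‖x t j - x t k‖)
          = -(U' ‖x t k - x t j‖ * (⟪x t k - x t j, v t k⟫ / ‖x t k - x t j‖)) := by
        intro j k hk
        rw [norm_sub_rev (x t j), ← neg_sub (x t k) (x t j), inner_neg_left]
        ring
      calc (1 / (2 * (N : ℝ))) * ∑ j, ∑ k ∈ Finset.univ.erase j,
            U' ‖x t k - x t j‖ * (⟪x t k - x t j, v t k - v t j⟫ / ‖x t k - x t j‖)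
          = (1 / (2 * (N : ℝ))) * ∑ j, ∑ k ∈ Finset.univ.erase j,
            (U' ‖x t k - x t j‖ * (⟪x t k - x t j, v t k⟫ / ‖x t k - x t j‖)
              - U' ‖x t k - x t j‖ * (⟪x t k - x t j, v t j⟫ / ‖x t k - x t j‖)) := by
            congr 1
            exact Finset.sum_congr rfl fun j _ =>
              Finset.sum_congr rfl fun k hk => hsplit j k hk
        _ = (1 / (2 * (N : ℝ))) *
            ((∑ j, ∑ k ∈ Finset.univ.erase j,
              U' ‖x t k - x t j‖ * (⟪x t k - x t j, v t k⟫ / ‖x t k - x t j‖))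
            - ∑ j, ∑ k ∈ Finset.univ.erase j,
              U' ‖x t k - x t j‖ * (⟪x t k - x t j, v t j⟫ / ‖x t k - x t j‖)) := by
            rw [← Finset.sum_sub_distrib]
            congr 1
            exact Finset.sum_congr rfl fun j _ => Finset.sum_sub_distrib _ _
        _ = (1 / (2 * (N : ℝ))) *
            (2 * ∑ j, ∑ k ∈ Finset.univ.erase j,
              U' ‖x t k - x t j‖ * (⟪x t k - x t j, v t k⟫ / ‖x t k - x t j‖)) := by
            have h2 : ∑ j, ∑ k ∈ Finset.univ.erase j,
                U' ‖x t k - x t j‖ * (⟪x t k - x t j, v t j⟫ / ‖x t k - x t j‖)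
                = -(∑ j, ∑ k ∈ Finset.univ.erase j,
                  U' ‖x t k - x t j‖ * (⟪x t k - x t j, v t k⟫ / ‖x t k - x t j‖)) := by
              rw [hswap (fun j k => U' ‖x t k - x t j‖ *
                (⟪x t k - x t j, v t j⟫ / ‖x t k - x t j‖))]
              rw [← Finset.sum_neg_distrib]
              refine Finset.sum_congr rfl fun j _ => ?_
              rw [← Finset.sum_neg_distrib]
              refine Finset.sum_congr rfl fun k hk => ?_
              exact hBA j k hk
            rw [h2]
            ring
        _ = (N : ℝ)⁻¹ * ∑ j, ∑ k ∈ Finset.univ.erase j,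
              U' ‖x t k - x t j‖ * (⟪x t k - x t j, v t k⟫ / ‖x t k - x t j‖) := by
            field_simp
        _ = (N : ℝ)⁻¹ * ∑ k, ∑ j ∈ Finset.univ.erase k,
              U' ‖x t k - x t j‖ * (⟪x t k - x t j, v t k⟫ / ‖x t k - x t j‖) := by
            rw [hswap]
        _ = ∑ i, ‖v t i‖ ^ 2 := by
            rw [Finset.mul_sum]
            exact Finset.sum_congr rfl fun k _ => (hk2 k).symm
    rw [← hval2]
    exact hsum
  refine ⟨fun t ht => ⟨key t ht, Finset.sum_nonneg fun i _ => sq_nonneg _⟩, ?_⟩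
  refine monotoneOn_of_deriv_nonneg (convex_Ioo a b) ?_ ?_ ?_
  · intro t ht
    exact (key t ht).continuousAt.continuousWithinAt
  · intro t ht
    rw [interior_Ioo] at ht
    exact ((key t ht).differentiableAt).differentiableWithinAt
  · intro t ht
    rw [interior_Ioo] at ht
    rw [(key t ht).deriv]
    exact Finset.sum_nonneg fun i _ => sq_nonneg _
end

section
/- Let d ≥ 1, N ≥ 2, let x₁,…,x_N ∈ ℝ^d, and let g : [0,∞) → ℝ be any function. Writing r_{i,i'} = ‖x_{i'} − x_i‖ and 𝐫_{i,i'} = x_{i'} − x_i, it holds that (1/N) Σ_{i=1}^N ‖(1/N) Σ_{i'≠i} g(r_{i,i'}) 𝐫_{i,i'}‖² ≤ ((N−1)²/N²) · (1/binom(N,2)) Σ_{1≤i<i'≤N} g(r_{i,i'})² r_{i,i'}². -/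
open Finset

theorem stmt_14 (d N : ℕ) (hd : 1 ≤ d) (hN : 2 ≤ N)
    (x : Fin N → EuclideanSpace ℝ (Fin d))
    (g : ℝ → ℝ) :
    (N : ℝ)⁻¹ * ∑ i,
        ‖(N : ℝ)⁻¹ • ∑ i' ∈ Finset.univ.erase i, g ‖x i' - x i‖ • (x i' - x i)‖ ^ 2 ≤
      (((N : ℝ) - 1) ^ 2 / (N : ℝ) ^ 2) * (1 / (N.choose 2 : ℝ)) *
        ∑ i, ∑ i' ∈ Finset.univ.filter (fun i' => i < i'),
          (g ‖x i' - x i‖) ^ 2 * ‖x i' - x i‖ ^ 2 := by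
  have hN0 : (0:ℝ) < N := by positivity
  have hN1 : (1:ℝ) ≤ (N:ℝ) := by exact_mod_cast le_trans (by norm_num) hN
  set H : Fin N → Fin N → ℝ := fun i i' => (g ‖x i' - x i‖) ^ 2 * ‖x i' - x i‖ ^ 2 with hH
  have hsym : ∀ i i', H i i' = H i' i := by
    intro i i'; simp only [hH]; rw [← norm_neg]; ring_nf; rw [neg_sub]
  -- per-i Cauchy-Schwarz
  have key : ∀ i : Fin N,
      ‖∑ i' ∈ Finset.univ.erase i, g ‖x i' - x i‖ • (x i' - x i)‖ ^ 2
        ≤ ((N:ℝ) - 1) * ∑ i' ∈ Finset.univ.erase i, H i i' := by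
    intro i
    have h1 : ‖∑ i' ∈ Finset.univ.erase i, g ‖x i' - x i‖ • (x i' - x i)‖
        ≤ ∑ i' ∈ Finset.univ.erase i, ‖g ‖x i' - x i‖ • (x i' - x i)‖ := norm_sum_le _ _
    have h2 : ‖∑ i' ∈ Finset.univ.erase i, g ‖x i' - x i‖ • (x i' - x i)‖ ^ 2
        ≤ (∑ i' ∈ Finset.univ.erase i, ‖g ‖x i' - x i‖ • (x i' - x i)‖) ^ 2 := by
      apply pow_le_pow_left₀ (norm_nonneg _) h1
    refine h2.trans ?_
    have h3 := sq_sum_le_card_mul_sum_sq (s := Finset.univ.erase i)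
      (f := fun i' => ‖g ‖x i' - x i‖ • (x i' - x i)‖)
    have hcard : ((Finset.univ.erase i).card : ℝ) = (N:ℝ) - 1 := by
      rw [Finset.card_erase_of_mem (mem_univ i)]
      simp
      rw [Nat.cast_sub (le_trans (by norm_num) hN)]
      simp
    calc _ ≤ ((Finset.univ.erase i).card : ℝ) * ∑ i' ∈ Finset.univ.erase i,
          ‖g ‖x i' - x i‖ • (x i' - x i)‖ ^ 2 := h3
      _ = ((N:ℝ) - 1) * ∑ i' ∈ Finset.univ.erase i, H i i' := by
          rw [hcard]
          congr 1
          apply Finset.sum_congr rfl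
          intro i' _
          rw [norm_smul]
          simp [hH, mul_pow, sq_abs]
  -- double sum symmetry
  have hT : ∑ i : Fin N, ∑ i' ∈ Finset.univ.erase i, H i i'
      = 2 * ∑ i : Fin N, ∑ i' ∈ Finset.univ.filter (fun i' => i < i'), H i i' := by
    have hsplit : ∀ i : Fin N, (Finset.univ.erase i)
        = (Finset.univ.filter (fun i' => i < i')) ∪ (Finset.univ.filter (fun i' => i' < i)) := by
      intro i; ext j
      simp only [Finset.mem_erase, Finset.mem_union, Finset.mem_filter, Finset.mem_univ,
        true_and, and_true, Fin.lt_def, ne_eq, Fin.ext_iff]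
      omega
    have hdisj : ∀ i : Fin N, Disjoint (Finset.univ.filter (fun i' => i < i'))
        (Finset.univ.filter (fun i' => i' < i)) := by
      intro i
      apply Finset.disjoint_filter_filter'
      simp only [disjoint_iff_inf_le]
      intro j hj
      simp only [Pi.inf_apply] at hj
      exact absurd hj.2 (not_lt.2 (le_of_lt hj.1))
    have hswap : ∑ i : Fin N, ∑ i' ∈ Finset.univ.filter (fun i' => i' < i), H i i'
        = ∑ i : Fin N, ∑ i' ∈ Finset.univ.filter (fun i' => i < i'), H i i' := by
      simp only [Finset.sum_filter]
      rw [Finset.sum_comm]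
      apply Finset.sum_congr rfl; intro i _
      apply Finset.sum_congr rfl; intro i' _
      by_cases h : i < i' <;> simp [h, hsym i i']
    calc ∑ i : Fin N, ∑ i' ∈ Finset.univ.erase i, H i i'
        = ∑ i : Fin N, (∑ i' ∈ Finset.univ.filter (fun i' => i < i'), H i i'
            + ∑ i' ∈ Finset.univ.filter (fun i' => i' < i), H i i') := by
          apply Finset.sum_congr rfl; intro i _
          rw [hsplit i, Finset.sum_union (hdisj i)]
      _ = 2 * ∑ i : Fin N, ∑ i' ∈ Finset.univ.filter (fun i' => i < i'), H i i' := by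
          rw [Finset.sum_add_distrib, hswap]; ring
  -- combine
  have step : (N : ℝ)⁻¹ * ∑ i,
        ‖(N : ℝ)⁻¹ • ∑ i' ∈ Finset.univ.erase i, g ‖x i' - x i‖ • (x i' - x i)‖ ^ 2
      ≤ (N:ℝ)⁻¹ * ((N:ℝ)⁻¹^2 * (((N:ℝ) - 1) *
          ∑ i : Fin N, ∑ i' ∈ Finset.univ.erase i, H i i')) := by
    have hnorm : ∀ i : Fin N,
        ‖(N : ℝ)⁻¹ • ∑ i' ∈ Finset.univ.erase i, g ‖x i' - x i‖ • (x i' - x i)‖ ^ 2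
        = (N:ℝ)⁻¹^2 * ‖∑ i' ∈ Finset.univ.erase i, g ‖x i' - x i‖ • (x i' - x i)‖ ^ 2 := by
      intro i
      rw [norm_smul, mul_pow, Real.norm_eq_abs, abs_of_nonneg (by positivity)]
    calc (N : ℝ)⁻¹ * ∑ i,
          ‖(N : ℝ)⁻¹ • ∑ i' ∈ Finset.univ.erase i, g ‖x i' - x i‖ • (x i' - x i)‖ ^ 2
        ≤ (N:ℝ)⁻¹ * ∑ i, (N:ℝ)⁻¹^2 *
            (((N:ℝ) - 1) * ∑ i' ∈ Finset.univ.erase i, H i i') := by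
          apply mul_le_mul_of_nonneg_left _ (by positivity)
          apply Finset.sum_le_sum
          intro i _
          rw [hnorm i]
          exact mul_le_mul_of_nonneg_left (key i) (by positivity)
      _ = (N:ℝ)⁻¹ * ((N:ℝ)⁻¹^2 * (((N:ℝ) - 1) *
            ∑ i : Fin N, ∑ i' ∈ Finset.univ.erase i, H i i')) := by
          rw [← Finset.mul_sum, ← Finset.mul_sum]
  refine step.trans (le_of_eq ?_)
  have hrfl : (∑ i, ∑ i' ∈ Finset.univ.filter (fun i' => i < i'),
      (g ‖x i' - x i‖) ^ 2 * ‖x i' - x i‖ ^ 2)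
      = ∑ i, ∑ i' ∈ Finset.univ.filter (fun i' => i < i'), H i i' := rfl
  rw [hT, hrfl, Nat.cast_choose_two]
  have h2N : (2:ℝ) ≤ (N:ℝ) := by exact_mod_cast hN
  have hne1 : (N:ℝ) - 1 ≠ 0 := by linarith
  field_simp
end

section
/- Let d, N, L, M ≥ 1, R > 0, S > 0, V ≥ 0, and let {X^m_l, Ẋ^m_l}_{l,m=1}^{L,M} be data in (ℝ^d)^N × (ℝ^d)^N such that all pairwise distances ‖x^m_{i'}(t_l) − x^m_i(t_l)‖ lie in [0, R] and ‖Ẋ^m_l‖_S ≤ V for all l, m. Then for all functions ψ₁, ψ₂ : [0, R] → ℝ with sup-norm at most S, the empirical loss satisfies the Lipschitz estimate |E_{L,M}(ψ₁) − E_{L,M}(ψ₂)| ≤ R·(2V + 2RS)·sup_{r ∈ [0,R]} |ψ₁(r) − ψ₂(r)|. -/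
open Finset

theorem stmt_16 (d N L M : ℕ) (hd : 1 ≤ d) (hN : 1 ≤ N) (hL : 1 ≤ L) (hM : 1 ≤ M)
    (R S V : ℝ) (hR : 0 < R) (hS : 0 < S) (hV : 0 ≤ V)
    (X Xdot : Fin L → Fin M → Fin N → EuclideanSpace ℝ (Fin d))
    (hdist : ∀ l m (i i' : Fin N), ‖X l m i' - X l m i‖ ≤ R)
    (f : (ℝ → ℝ) → (Fin N → EuclideanSpace ℝ (Fin d)) → Fin N → EuclideanSpace ℝ (Fin d))
    (hf : ∀ ψ Y i,
      f ψ Y i = (N : ℝ)⁻¹ • ∑ i' ∈ Finset.univ.erase i, ψ ‖Y i' - Y i‖ • (Y i' - Y i))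
    (SnSq : (Fin N → EuclideanSpace ℝ (Fin d)) → ℝ)
    (hSnSq : ∀ U, SnSq U = (N : ℝ)⁻¹ * ∑ i, ‖U i‖ ^ 2)
    (hVbound : ∀ l m, Real.sqrt (SnSq (Xdot l m)) ≤ V)
    (Err : (ℝ → ℝ) → ℝ)
    (hErr : ∀ ψ, Err ψ =
      (1 / ((L : ℝ) * M)) * ∑ l, ∑ m, SnSq (fun i => Xdot l m i - f ψ (X l m) i)) :
    ∀ ψ₁ ψ₂ : ℝ → ℝ,
      (∀ r ∈ Set.Icc (0 : ℝ) R, |ψ₁ r| ≤ S) →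
      (∀ r ∈ Set.Icc (0 : ℝ) R, |ψ₂ r| ≤ S) →
      |Err ψ₁ - Err ψ₂| ≤
        R * (2 * V + 2 * R * S) * ⨆ r : Set.Icc (0 : ℝ) R, |ψ₁ r - ψ₂ r| := by
  intro ψ₁ ψ₂ h1 h2
  have hNpos : (0:ℝ) < (N:ℝ) := by exact_mod_cast hN
  set ε := ⨆ r : Set.Icc (0:ℝ) R, |ψ₁ r - ψ₂ r| with hεdef
  have hbdd : BddAbove (Set.range fun r : Set.Icc (0:ℝ) R => |ψ₁ r - ψ₂ r|) := by
    refine ⟨2*S, ?_⟩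
    rintro x ⟨r, rfl⟩
    have ha := h1 r r.2
    have hb := h2 r r.2
    calc |ψ₁ r - ψ₂ r| ≤ |ψ₁ r| + |ψ₂ r| := abs_sub _ _
      _ ≤ 2 * S := by linarith
  have hεle : ∀ r : ℝ, 0 ≤ r → r ≤ R → |ψ₁ r - ψ₂ r| ≤ ε := by
    intro r h0 hr
    exact le_ciSup hbdd (⟨r, h0, hr⟩ : Set.Icc (0:ℝ) R)
  have hε0 : 0 ≤ ε := (abs_nonneg _).trans (hεle 0 le_rfl hR.le)
  -- generic bound on sums of the shape appearing in f
  have key : ∀ (g : ℝ → ℝ) (C : ℝ), 0 ≤ C → (∀ r : ℝ, 0 ≤ r → r ≤ R → |g r| ≤ C) →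
      ∀ l m i, ‖(N:ℝ)⁻¹ • ∑ i' ∈ Finset.univ.erase i,
        g ‖X l m i' - X l m i‖ • (X l m i' - X l m i)‖ ≤ R * C := by
    intro g C hC hg l m i
    rw [norm_smul, Real.norm_eq_abs, abs_of_nonneg (by positivity : (0:ℝ) ≤ (N:ℝ)⁻¹)]
    have hsum : ‖∑ i' ∈ Finset.univ.erase i,
        g ‖X l m i' - X l m i‖ • (X l m i' - X l m i)‖
        ≤ ∑ _i' ∈ Finset.univ.erase i, (C * R) := by
      refine norm_sum_le_of_le _ fun i' _ => ?_
      rw [norm_smul, Real.norm_eq_abs]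
      exact mul_le_mul (hg _ (norm_nonneg _) (hdist l m i i')) (hdist l m i i')
        (norm_nonneg _) hC
    rw [Finset.sum_const, nsmul_eq_mul] at hsum
    have hcard : ((Finset.univ.erase i).card : ℝ) ≤ (N:ℝ) := by
      have := Finset.card_erase_le (a := i) (s := (Finset.univ : Finset (Fin N)))
      have : (Finset.univ.erase i).card ≤ N := by simpa using this
      exact_mod_cast this
    calc (N:ℝ)⁻¹ * ‖∑ i' ∈ Finset.univ.erase i,
          g ‖X l m i' - X l m i‖ • (X l m i' - X l m i)‖
        ≤ (N:ℝ)⁻¹ * (((Finset.univ.erase i).card : ℝ) * (C * R)) := by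
          exact mul_le_mul_of_nonneg_left hsum (by positivity)
      _ ≤ (N:ℝ)⁻¹ * ((N:ℝ) * (C * R)) := by
          refine mul_le_mul_of_nonneg_left ?_ (by positivity)
          exact mul_le_mul_of_nonneg_right hcard (by positivity)
      _ = R * C := by field_simp
  have hfS : ∀ (ψ : ℝ → ℝ), (∀ r ∈ Set.Icc (0:ℝ) R, |ψ r| ≤ S) →
      ∀ l m i, ‖f ψ (X l m) i‖ ≤ R * S := by
    intro ψ hψ l m i
    rw [hf]
    exact key ψ S hS.le (fun r h0 hr => hψ r ⟨h0, hr⟩) l m i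
  have hfd : ∀ l m i, ‖f ψ₁ (X l m) i - f ψ₂ (X l m) i‖ ≤ R * ε := by
    intro l m i
    have heq : f ψ₁ (X l m) i - f ψ₂ (X l m) i = (N:ℝ)⁻¹ • ∑ i' ∈ Finset.univ.erase i,
        (fun r => ψ₁ r - ψ₂ r) ‖X l m i' - X l m i‖ • (X l m i' - X l m i) := by
      rw [hf, hf, ← smul_sub, ← Finset.sum_sub_distrib]
      congr 1
      refine Finset.sum_congr rfl fun i' _ => ?_
      rw [← sub_smul]
    rw [heq]
    exact key _ ε hε0 (fun r h0 hr => hεle r h0 hr) l m i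
  -- average of norms bounded by V
  have hT : ∀ l m, (N:ℝ)⁻¹ * ∑ i, ‖Xdot l m i‖ ≤ V := by
    intro l m
    set T := (N:ℝ)⁻¹ * ∑ i, ‖Xdot l m i‖ with hTdef
    have hT0 : 0 ≤ T := by positivity
    have hsq : T ^ 2 ≤ SnSq (Xdot l m) := by
      rw [hSnSq]
      have hcs := sq_sum_le_card_mul_sum_sq (s := (Finset.univ : Finset (Fin N)))
        (f := fun i => ‖Xdot l m i‖)
      have hcs' : (∑ i, ‖Xdot l m i‖) ^ 2 ≤ (N:ℝ) * ∑ i, ‖Xdot l m i‖ ^ 2 := by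
        simpa using hcs
      rw [hTdef, mul_pow]
      calc (N:ℝ)⁻¹ ^ 2 * (∑ i, ‖Xdot l m i‖) ^ 2
          ≤ (N:ℝ)⁻¹ ^ 2 * ((N:ℝ) * ∑ i, ‖Xdot l m i‖ ^ 2) :=
            mul_le_mul_of_nonneg_left hcs' (by positivity)
        _ = (N:ℝ)⁻¹ * ∑ i, ‖Xdot l m i‖ ^ 2 := by field_simp
    have : T ≤ Real.sqrt (SnSq (Xdot l m)) := by
      have := Real.sqrt_le_sqrt hsq
      rwa [Real.sqrt_sq hT0] at this
    exact this.trans (hVbound l m)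
  -- pointwise bound for each (l, m)
  set B := R * (2 * V + 2 * R * S) * ε with hBdef
  have hB0 : 0 ≤ B := by positivity
  have hmain : ∀ l m, |SnSq (fun i => Xdot l m i - f ψ₁ (X l m) i)
      - SnSq (fun i => Xdot l m i - f ψ₂ (X l m) i)| ≤ B := by
    intro l m
    rw [hSnSq, hSnSq, ← mul_sub, ← Finset.sum_sub_distrib]
    have hterm : ∀ i : Fin N, |‖Xdot l m i - f ψ₁ (X l m) i‖ ^ 2
        - ‖Xdot l m i - f ψ₂ (X l m) i‖ ^ 2|
        ≤ R * ε * (2 * ‖Xdot l m i‖ + 2 * R * S) := by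
      intro i
      set a := ‖Xdot l m i - f ψ₁ (X l m) i‖ with ha
      set b := ‖Xdot l m i - f ψ₂ (X l m) i‖ with hb
      have ha0 : 0 ≤ a := norm_nonneg _
      have hb0 : 0 ≤ b := norm_nonneg _
      have hdiff : |a - b| ≤ R * ε := by
        have h1' : |a - b| ≤ ‖(Xdot l m i - f ψ₁ (X l m) i) - (Xdot l m i - f ψ₂ (X l m) i)‖ :=
          abs_norm_sub_norm_le _ _
        have h2' : (Xdot l m i - f ψ₁ (X l m) i) - (Xdot l m i - f ψ₂ (X l m) i)
            = -(f ψ₁ (X l m) i - f ψ₂ (X l m) i) := by abel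
        rw [h2', norm_neg] at h1'
        exact h1'.trans (hfd l m i)
      have hasum : a ≤ ‖Xdot l m i‖ + R * S := by
        calc a ≤ ‖Xdot l m i‖ + ‖f ψ₁ (X l m) i‖ := norm_sub_le _ _
          _ ≤ ‖Xdot l m i‖ + R * S := by linarith [hfS ψ₁ h1 l m i]
      have hbsum : b ≤ ‖Xdot l m i‖ + R * S := by
        calc b ≤ ‖Xdot l m i‖ + ‖f ψ₂ (X l m) i‖ := norm_sub_le _ _
          _ ≤ ‖Xdot l m i‖ + R * S := by linarith [hfS ψ₂ h2 l m i]
      have : |a ^ 2 - b ^ 2| = |a - b| * |a + b| := by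
        rw [← abs_mul]; ring_nf
      rw [this]
      have habs : |a + b| ≤ 2 * ‖Xdot l m i‖ + 2 * R * S := by
        rw [abs_of_nonneg (by linarith)]
        linarith
      exact mul_le_mul hdiff habs (abs_nonneg _) (by positivity)
    have hsum : |∑ i, (‖Xdot l m i - f ψ₁ (X l m) i‖ ^ 2
        - ‖Xdot l m i - f ψ₂ (X l m) i‖ ^ 2)|
        ≤ ∑ i, R * ε * (2 * ‖Xdot l m i‖ + 2 * R * S) :=
      (Finset.abs_sum_le_sum_abs _ _).trans (Finset.sum_le_sum fun i _ => hterm i)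
    rw [abs_mul, abs_of_nonneg (by positivity : (0:ℝ) ≤ (N:ℝ)⁻¹)]
    calc (N:ℝ)⁻¹ * |∑ i, (‖Xdot l m i - f ψ₁ (X l m) i‖ ^ 2
          - ‖Xdot l m i - f ψ₂ (X l m) i‖ ^ 2)|
        ≤ (N:ℝ)⁻¹ * ∑ i, R * ε * (2 * ‖Xdot l m i‖ + 2 * R * S) :=
          mul_le_mul_of_nonneg_left hsum (by positivity)
      _ ≤ (N:ℝ)⁻¹ * ((N:ℝ) * B) := by
          refine mul_le_mul_of_nonneg_left ?_ (by positivity)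
          have hSs : ∑ i, ‖Xdot l m i‖ ≤ (N:ℝ) * V := by
            have h := hT l m
            have h2 : (N:ℝ) * ((N:ℝ)⁻¹ * ∑ i, ‖Xdot l m i‖) ≤ (N:ℝ) * V :=
              mul_le_mul_of_nonneg_left h hNpos.le
            rwa [← mul_assoc, mul_inv_cancel₀ (ne_of_gt hNpos), one_mul] at h2
          have hexp : ∑ i, R * ε * (2 * ‖Xdot l m i‖ + 2 * R * S)
              = R * ε * 2 * (∑ i, ‖Xdot l m i‖) + (N:ℝ) * (R * ε * (2 * R * S)) := by
            simp only [mul_add]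
            rw [Finset.sum_add_distrib, Finset.sum_const, Finset.card_univ,
              Fintype.card_fin, nsmul_eq_mul]
            congr 1
            rw [Finset.mul_sum]
            exact Finset.sum_congr rfl fun i _ => by ring
          rw [hexp]
          have h1' : R * ε * 2 * (∑ i, ‖Xdot l m i‖) ≤ R * ε * 2 * ((N:ℝ) * V) :=
            mul_le_mul_of_nonneg_left hSs (by positivity)
          have hBeq : (N:ℝ) * B = R * ε * 2 * ((N:ℝ) * V) + (N:ℝ) * (R * ε * (2 * R * S)) := by
            rw [hBdef]; ring
          linarith
      _ = B := by field_simp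
  -- assemble
  rw [hErr, hErr, ← mul_sub, ← Finset.sum_sub_distrib]
  have hLM : (0:ℝ) < (L:ℝ) * (M:ℝ) := by
    have hL' : (0:ℝ) < (L:ℝ) := by exact_mod_cast hL
    have hM' : (0:ℝ) < (M:ℝ) := by exact_mod_cast hM
    positivity
  rw [abs_mul, abs_of_nonneg (by positivity : (0:ℝ) ≤ 1 / ((L:ℝ) * M))]
  have hsum2 : |∑ l, (∑ m, SnSq (fun i => Xdot l m i - f ψ₁ (X l m) i)
      - ∑ m, SnSq (fun i => Xdot l m i - f ψ₂ (X l m) i))| ≤ (L:ℝ) * (M:ℝ) * B := by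
    calc |∑ l, (∑ m, SnSq (fun i => Xdot l m i - f ψ₁ (X l m) i)
          - ∑ m, SnSq (fun i => Xdot l m i - f ψ₂ (X l m) i))|
        ≤ ∑ l : Fin L, |∑ m, SnSq (fun i => Xdot l m i - f ψ₁ (X l m) i)
          - ∑ m, SnSq (fun i => Xdot l m i - f ψ₂ (X l m) i)| :=
          Finset.abs_sum_le_sum_abs _ _
      _ ≤ ∑ l : Fin L, (M:ℝ) * B := by
          refine Finset.sum_le_sum fun l _ => ?_
          rw [← Finset.sum_sub_distrib]
          calc |∑ m, (SnSq (fun i => Xdot l m i - f ψ₁ (X l m) i)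
                - SnSq (fun i => Xdot l m i - f ψ₂ (X l m) i))|
              ≤ ∑ m : Fin M, |SnSq (fun i => Xdot l m i - f ψ₁ (X l m) i)
                - SnSq (fun i => Xdot l m i - f ψ₂ (X l m) i)| :=
                Finset.abs_sum_le_sum_abs _ _
            _ ≤ ∑ m : Fin M, B := Finset.sum_le_sum fun m _ => hmain l m
            _ = (M:ℝ) * B := by rw [Finset.sum_const]; simp [nsmul_eq_mul]
      _ = (L:ℝ) * (M:ℝ) * B := by rw [Finset.sum_const]; simp [nsmul_eq_mul]; ring
  calc 1 / ((L:ℝ) * M) * |∑ l, (∑ m, SnSq (fun i => Xdot l m i - f ψ₁ (X l m) i)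
        - ∑ m, SnSq (fun i => Xdot l m i - f ψ₂ (X l m) i))|
      ≤ 1 / ((L:ℝ) * M) * ((L:ℝ) * (M:ℝ) * B) :=
        mul_le_mul_of_nonneg_left hsum2 (by positivity)
    _ = B := by field_simp
    _ = R * (2 * V + 2 * R * S) * ε := by rw [hBdef]
end
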